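/- arXiv:2505.02544 — 2 statements merged into one kernel-verified Lean document; each statement's English description precedes it below -/
import Mathlib

section
/- Assume a nested system of fundamental sequences on Γ. Let s, t be finite subsets of ℕ (viewed as increasing sequences) with |s| ≤ |t| and 1 < t(i) ≤ s(i) for each i < |s|. Then α[t] ≤ α[s] for every ordinal α ≤ Γ. -/
/-! Induction on `α`. Write `s = s₀ :: s'`, `t = t₀ :: t'` and `γ = α[t₀] ≤ α[s₀] < α`. One shows
`γ[t'] ≤ c[v]` for every `c` with `γ ≤ c < α` and every nondecreasing `v` with entries `≥ t₀`
dominating `t'`, by induction along `v`: if `c = γ` this is the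
induction hypothesis at `γ < α`; if `γ < c`, nestedness at `n = t₀` forces `γ ≤ c[t₀] ≤ c[v₀]`, so
one may pass from `c` to `c[v₀] < α`. -/

open Ordinal

structure FSSystem (Γ : Ordinal) where
  fs : Ordinal → ℕ → Ordinal
  fs_zero : ∀ n, fs 0 n = 0
  mono : ∀ α, α ≤ Γ → Monotone (fs α)
  sup_eq : ∀ α, α ≤ Γ → α ≠ 0 → (⨆ n : ℕ, fs α n + 1) = α

def FSSystem.Nested {Γ : Ordinal} (S : FSSystem Γ) : Prop :=
  ∀ γ β (n : ℕ), γ < β → β ≤ Γ → 1 < n → ¬ (S.fs γ n < S.fs β n ∧ S.fs β n < γ)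

/-- Iterated evaluation `α[s_0][s_1]…[s_{m-1}]` along a list. -/
def FSSystem.evalL {Γ : Ordinal} (S : FSSystem Γ) (α : Ordinal) (s : List ℕ) : Ordinal :=
  s.foldl S.fs α

/-- `s.Dominates t`: `t` is at least as long as `s` and `t[i] ≤ s[i]` for `i < s.length`. -/
inductive List.Dominates {β : Type*} [LE β] : List β → List β → Prop
  | nil (t : List β) : Dominates [] t
  | cons {a b : β} {s t : List β} : a ≤ b → Dominates s t → Dominates (b :: s) (a :: t)

namespace List

variable {β : Type*}

theorem dominates_of_getElem [LE β] {s t : List β} (hlen : s.length ≤ t.length)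
    (h : ∀ i (hi : i < s.length), t[i]'(hi.trans_le hlen) ≤ s[i]) : s.Dominates t := by
  induction s generalizing t with
  | nil => exact .nil t
  | cons b s ih =>
    obtain _ | ⟨a, t⟩ := t
    · simp at hlen
    · exact .cons (h 0 (Nat.succ_pos _))
        (ih (Nat.le_of_succ_le_succ hlen) fun i hi => h (i + 1) (Nat.succ_lt_succ hi))

theorem Dominates.of_cons [Preorder β] {b : β} {s t : List β}
    (hs : (b :: s).Pairwise (· ≤ ·)) (h : (b :: s).Dominates t) : s.Dominates t := by
  induction s generalizing b t with
  | nil => exact .nil t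
  | cons b' s ih =>
    obtain _ | ⟨hab, hst⟩ := h
    have hbb' : b ≤ b' := rel_of_pairwise_cons hs mem_cons_self
    exact .cons (hab.trans hbb') (ih hs.of_cons hst)

end List

namespace FSSystem

variable {Γ : Ordinal} (S : FSSystem Γ)

theorem fs_lt_self {α : Ordinal} (hα : α ≤ Γ) (h0 : α ≠ 0) (n : ℕ) : S.fs α n < α :=
  calc S.fs α n < S.fs α n + 1 := lt_add_one _
    _ ≤ ⨆ m : ℕ, S.fs α m + 1 := Ordinal.le_iSup (fun m => S.fs α m + 1) n
    _ = α := S.sup_eq α hα h0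

theorem fs_le_self {α : Ordinal} (hα : α ≤ Γ) (n : ℕ) : S.fs α n ≤ α := by
  rcases eq_or_ne α 0 with rfl | h0
  · rw [S.fs_zero]
  · exact (S.fs_lt_self hα h0 n).le

theorem fs_le {α : Ordinal} (hα : α ≤ Γ) (n : ℕ) : S.fs α n ≤ Γ :=
  (S.fs_le_self hα n).trans hα

@[simp]
theorem evalL_cons (α : Ordinal) (n : ℕ) (v : List ℕ) :
    S.evalL α (n :: v) = S.evalL (S.fs α n) v :=
  rfl

@[simp]
theorem evalL_zero (v : List ℕ) : S.evalL 0 v = 0 := by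
  induction v with
  | nil => rfl
  | cons n v ih => rw [evalL_cons, S.fs_zero, ih]

theorem evalL_le_self {α : Ordinal} (hα : α ≤ Γ) (v : List ℕ) : S.evalL α v ≤ α := by
  induction v generalizing α with
  | nil => exact le_rfl
  | cons n v ih => exact (ih (S.fs_le hα n)).trans (S.fs_le_self hα n)

variable {S}

theorem Nested.fs_le_fs_of_lt (hN : S.Nested) {c α : Ordinal} {n : ℕ} (hcα : c < α)
    (hα : α ≤ Γ) (hn : 1 < n) (h : S.fs α n < c) : S.fs α n ≤ S.fs c n := by
  by_contra! h'
  exact hN c α n hcα hα hn ⟨h', h⟩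

theorem Nested.evalL_fs_le_evalL (hN : S.Nested) {α : Ordinal} (hα : α ≤ Γ) {n : ℕ}
    (hn : 1 < n) {t : List ℕ}
    (hγ : ∀ v : List ℕ, v.Pairwise (· ≤ ·) → v.Dominates t →
      S.evalL (S.fs α n) t ≤ S.evalL (S.fs α n) v)
    {v : List ℕ} (hv : v.Pairwise (· ≤ ·)) (hvn : ∀ k ∈ v, n ≤ k) (hvt : v.Dominates t)
    {c : Ordinal} (hγc : S.fs α n ≤ c) (hcα : c < α) :
    S.evalL (S.fs α n) t ≤ S.evalL c v := by
  induction v generalizing c with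
  | nil => exact (S.evalL_le_self (S.fs_le hα n) t).trans hγc
  | cons k v ih =>
    rcases hγc.eq_or_lt with rfl | hγc
    · exact hγ _ hv hvt
    have hcΓ : c ≤ Γ := hcα.le.trans hα
    have hγck : S.fs α n ≤ S.fs c k :=
      (hN.fs_le_fs_of_lt hcα hα hn hγc).trans (S.mono c hcΓ (hvn k List.mem_cons_self))
    exact ih hv.of_cons (fun k' hk' => hvn k' (List.mem_cons_of_mem _ hk')) (hvt.of_cons hv)
      hγck ((S.fs_le_self hcΓ k).trans_lt hcα)

theorem Nested.evalL_le_evalL_of_dominates (hN : S.Nested) {α : Ordinal} (hα : α ≤ Γ)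
    {s t : List ℕ} (hs : s.Pairwise (· ≤ ·)) (ht : t.Pairwise (· ≤ ·)) (ht1 : ∀ x ∈ t, 1 < x)
    (hst : s.Dominates t) : S.evalL α t ≤ S.evalL α s := by
  induction α using WellFoundedLT.induction generalizing s t with
  | _ α IH =>
  obtain _ | ⟨hts₀, hst'⟩ := hst
  · exact S.evalL_le_self hα t
  rcases eq_or_ne α 0 with rfl | hα0
  · simp only [evalL_zero, le_refl]
  rw [evalL_cons, evalL_cons]
  exact hN.evalL_fs_le_evalL hα (ht1 _ List.mem_cons_self)
    (fun v hv hvt => IH _ (S.fs_lt_self hα hα0 _) (S.fs_le hα _) hv ht.of_cons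
      (fun x hx => ht1 x (List.mem_cons_of_mem _ hx)) hvt)
    hs.of_cons (fun k hk => hts₀.trans (List.rel_of_pairwise_cons hs hk)) hst'
    (S.mono α hα hts₀) (S.fs_lt_self hα hα0 _)

end FSSystem

/-- In a nested system, if `s, t` are increasing finite sequences with `|s| ≤ |t|` and
`1 < t(i) ≤ s(i)` for all `i < |s|`, then `α[t] ≤ α[s]` for every `α ≤ Γ`. -/
theorem nested_subset_lemma {Γ : Ordinal} (S : FSSystem Γ) (hN : S.Nested)
    (s t : List ℕ) (hs : s.Pairwise (· < ·)) (ht : t.Pairwise (· < ·))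
    (hlen : s.length ≤ t.length)
    (hcomp : ∀ i (hi : i < s.length),
      1 < t.get ⟨i, lt_of_lt_of_le hi hlen⟩ ∧ t.get ⟨i, lt_of_lt_of_le hi hlen⟩ ≤ s.get ⟨i, hi⟩)
    (α : Ordinal) (hα : α ≤ Γ) :
    S.evalL α t ≤ S.evalL α s := by
  obtain _ | ⟨s₀, s'⟩ := s
  · exact S.evalL_le_self hα t
  obtain _ | ⟨t₀, t'⟩ := t
  · simp at hlen
  have ht₀ : 1 < t₀ := (hcomp 0 (Nat.succ_pos _)).1
  have ht1 : ∀ x ∈ t₀ :: t', 1 < x := by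
    rintro x (_ | ⟨_, hx⟩)
    exacts [ht₀, ht₀.trans (List.rel_of_pairwise_cons ht hx)]
  exact hN.evalL_le_evalL_of_dominates hα (hs.imp le_of_lt) (ht.imp le_of_lt) ht1
    (List.dominates_of_getElem hlen fun i hi => (hcomp i hi).2)
end

section
/- Let B be a block. Then B is smooth if and only if for all s, t ∈ T(B) with |s| = |t| and ht_B(s) < ht_B(t) there exists i < |s| such that s(i) < t(i). -/
open Ordinal

/-- The base of a family of finite increasing sequences: all naturals occurring in it. -/
def sbase (B : Set (List ℕ)) : Set ℕ := {n | ∃ s ∈ B, n ∈ s}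

/-- A block: a non-degenerate front. Finite subsets of `ℕ` are identified with their increasing
enumerations. Every infinite subset of the base (given by its increasing enumeration `f`) has an
initial segment in `B`, and `B` is prefix-free. -/
structure IsBlock (B : Set (List ℕ)) : Prop where
  sorted : ∀ s ∈ B, s.Pairwise (· < ·)
  base_infinite : (sbase B).Infinite
  prefix_exists : ∀ f : ℕ → ℕ, StrictMono f → (∀ i, f i ∈ sbase B) →
    ∃ k, (List.range k).map f ∈ B
  prefix_free : ∀ s ∈ B, ∀ t ∈ B, s <+: t → s = t

/-- Smoothness: for `s, t ∈ B` with `|s| < |t|` there is `i < |s|` with `s(i) < t(i)`. -/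
def IsSmooth (B : Set (List ℕ)) : Prop :=
  ∀ s ∈ B, ∀ t ∈ B, s.length < t.length →
    ∃ i, ∃ (hi : i < s.length) (hi' : i < t.length), s.get ⟨i, hi⟩ < t.get ⟨i, hi'⟩

/-- The tree `T(B)`: the closure of `B` under initial segments. -/
def TreeOf (B : Set (List ℕ)) : Set (List ℕ) := {s | ∃ t ∈ B, s <+: t}

/-- The child relation on the tree `T(B)`: `t` is a one-point extension of `s` lying in `T(B)`. -/
def childRel (B : Set (List ℕ)) (t s : List ℕ) : Prop :=
  t ∈ TreeOf B ∧ ∃ n, t = s ++ [n]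

/-- The height of the node `s` in the well-founded tree `T(B)`. -/
noncomputable def nodeHt (B : Set (List ℕ)) (h : WellFounded (childRel B)) (s : List ℕ) :
    Ordinal :=
  (h.apply s).rank

/-- The height `ht(B)` of the front `B`: the height of the tree `T(B)`. -/
noncomputable def htB (B : Set (List ℕ)) (h : WellFounded (childRel B)) : Ordinal :=
  nodeHt B h []

/-!
In a smooth block, height is monotone for the pointwise order on nodes of equal length. If
`t ≤ s` pointwise and `t ++ [m]` is a child of `t`, then `s ∉ B`, since otherwise `s` would be
pointwise at least as large as the start of a longer member of `B`. So `s` has a child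
`s ++ [m']` with `m < m'`: a node outside `B` has children with arbitrarily large last entries,
by extending it with a tail of the base and applying the front property. Well-founded induction
then gives `ht(t ++ [m]) ≤ ht(s ++ [m']) < ht(s)`. Conversely, members of `B` have height `0`
while proper initial segments of members have positive height, so the tree condition applied to
`s` and the first `|s|` entries of a longer member `t` is smoothness.
-/

open List

def appendSeq (s : List ℕ) (g : ℕ → ℕ) (i : ℕ) : ℕ :=
  if h : i < s.length then s[i] else g (i - s.length)

lemma strictMono_appendSeq {s : List ℕ} (hs : s.Pairwise (· < ·)) {g : ℕ → ℕ}
    (hg : StrictMono g) (hsg : ∀ x ∈ s, x < g 0) : StrictMono (appendSeq s g) := by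
  intro i j hij
  unfold appendSeq
  split_ifs with hi hj hj
  · exact hs.sortedLT.strictMono_get (show (⟨i, hi⟩ : Fin s.length) < ⟨j, hj⟩ from hij)
  · exact (hsg _ (getElem_mem hi)).trans_le (hg.monotone (Nat.zero_le _))
  · omega
  · exact hg (by omega)

lemma map_range_appendSeq (s : List ℕ) (g : ℕ → ℕ) :
    (range (s.length + 1)).map (appendSeq s g) = s ++ [g 0] := by
  refine ext_getElem (by simp) fun i h _ => ?_
  simp only [length_map, length_range] at h
  rcases Nat.lt_succ_iff_lt_or_eq.1 h with hi | rfl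
  · simp [appendSeq, hi, getElem_append_left]
  · simp [appendSeq]

lemma map_range_prefix_map_range (f : ℕ → ℕ) {j k : ℕ} (hjk : j ≤ k) :
    (range j).map f <+: (range k).map f := by
  have : (range j).map f = ((range k).map f).take j := by
    rw [← map_take, take_range, min_eq_left hjk]
  exact this ▸ take_prefix _ _

lemma Set.Infinite.exists_strictMono_forall_mem {A : Set ℕ} (hA : A.Infinite) (K : ℕ) :
    ∃ g : ℕ → ℕ, StrictMono g ∧ (∀ i, g i ∈ A) ∧ K < g 0 := by
  have hinf : (A ∩ Set.Ioi K).Infinite := by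
    rw [← Set.sdiff_compl, Set.compl_Ioi]
    exact hA.sdiff (Set.finite_Iic K)
  exact ⟨Nat.nth (· ∈ A ∩ Set.Ioi K), Nat.nth_strictMono hinf,
    fun i => (Nat.nth_mem_of_infinite hinf i).1, Nat.nth_mem_of_infinite hinf 0 |>.2⟩

variable {B : Set (List ℕ)}

lemma mem_treeOf_of_mem {s : List ℕ} (hs : s ∈ B) : s ∈ TreeOf B :=
  ⟨s, hs, prefix_refl s⟩

lemma mem_treeOf_of_prefix {s t : List ℕ} (hst : s <+: t) (ht : t ∈ TreeOf B) :
    s ∈ TreeOf B :=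
  let ⟨u, hu, htu⟩ := ht
  ⟨u, hu, hst.trans htu⟩

lemma mem_sbase_of_mem_treeOf {s : List ℕ} (hs : s ∈ TreeOf B) {x : ℕ} (hx : x ∈ s) :
    x ∈ sbase B :=
  let ⟨u, hu, hsu⟩ := hs
  ⟨u, hu, hsu.subset hx⟩

lemma childRel_take_succ {t : List ℕ} (ht : t ∈ TreeOf B) {n : ℕ} (hn : n < t.length) :
    childRel B (t.take (n + 1)) (t.take n) :=
  ⟨mem_treeOf_of_prefix (take_prefix _ _) ht, t[n], (take_concat_get' t n hn).symm⟩

namespace IsBlock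

variable (hB : IsBlock B)
include hB

lemma pairwise_lt_of_mem_treeOf {s : List ℕ} (hs : s ∈ TreeOf B) : s.Pairwise (· < ·) :=
  let ⟨u, hu, hsu⟩ := hs
  (hB.sorted u hu).sublist hsu.sublist

lemma eq_of_prefix_of_mem {p s : List ℕ} (hp : p ∈ B) (hs : s ∈ TreeOf B) (hps : p <+: s) :
    s = p := by
  obtain ⟨u, hu, hsu⟩ := hs
  obtain rfl : p = u := hB.prefix_free p hp u hu (hps.trans hsu)
  exact hsu.eq_of_length (le_antisymm hsu.length_le hps.length_le)

lemma not_childRel_of_mem {s : List ℕ} (hs : s ∈ B) (t : List ℕ) : ¬ childRel B t s := by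
  rintro ⟨ht, m, rfl⟩
  simpa using congrArg length (hB.eq_of_prefix_of_mem hs ht (prefix_append s [m]))

lemma exists_append_mem_treeOf {s : List ℕ} (hs : s ∈ TreeOf B) (hsB : s ∉ B) (M : ℕ) :
    ∃ m, M < m ∧ s ++ [m] ∈ TreeOf B := by
  obtain ⟨g, hg, hgB, hg0⟩ := hB.base_infinite.exists_strictMono_forall_mem (M :: s).sum
  have hbound : ∀ x ∈ M :: s, x < g 0 := fun x hx => (le_sum_of_mem hx).trans_lt hg0
  set f := appendSeq s g
  have hf : StrictMono f := strictMono_appendSeq (hB.pairwise_lt_of_mem_treeOf hs) hg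
    fun x hx => hbound x (mem_cons_of_mem M hx)
  have hfB : ∀ i, f i ∈ sbase B := by
    intro i
    unfold f appendSeq
    split_ifs with hi
    · exact mem_sbase_of_mem_treeOf hs (getElem_mem hi)
    · exact hgB _
  obtain ⟨k, hk⟩ := hB.prefix_exists f hf hfB
  have hsucc : (range (s.length + 1)).map f = s ++ [g 0] := map_range_appendSeq s g
  refine ⟨g 0, hbound M mem_cons_self, ?_⟩
  rcases le_or_gt k s.length with hks | hks
  · have hpre : (range k).map f <+: s := by
      have := map_range_prefix_map_range f (hks.trans (Nat.le_succ _))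
      rw [hsucc] at this
      exact prefix_of_prefix_length_le this (prefix_append s [g 0]) (by simpa using hks)
    exact absurd (hB.eq_of_prefix_of_mem hk hs hpre ▸ hk) hsB
  · exact ⟨_, hk, hsucc ▸ map_range_prefix_map_range f hks⟩

end IsBlock

section Height

variable (hwf : WellFounded (childRel B))

lemma nodeHt_lt_of_childRel {s t : List ℕ} (h : childRel B t s) :
    nodeHt B hwf t < nodeHt B hwf s :=
  Acc.rank_lt_of_rel (hwf.apply s) h

lemma nodeHt_le_of_forall_childRel_lt {s : List ℕ} {o : Ordinal}
    (h : ∀ t, childRel B t s → nodeHt B hwf t < o) : nodeHt B hwf s ≤ o := by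
  rw [nodeHt, Acc.rank_eq]
  exact Ordinal.iSup_le fun ⟨t, ht⟩ => Order.succ_le_of_lt (h t ht)

lemma IsBlock.nodeHt_eq_zero (hB : IsBlock B) {s : List ℕ} (hs : s ∈ B) :
    nodeHt B hwf s = 0 :=
  nonpos_iff_eq_zero.1 <| nodeHt_le_of_forall_childRel_lt hwf fun t ht =>
    absurd ht (hB.not_childRel_of_mem hs t)

end Height

lemma IsSmooth.exists_lt_of_mem_treeOf (hsm : IsSmooth B) {s u : List ℕ} (hs : s ∈ B)
    (hu : u ∈ TreeOf B) (hsu : s.length < u.length) :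
    ∃ i, ∃ (hi : i < s.length) (hi' : i < u.length), s[i] < u[i] := by
  obtain ⟨v, hv, huv⟩ := hu
  obtain ⟨i, hi, hi', hlt⟩ := hsm s hs v hv (hsu.trans_le huv.length_le)
  exact ⟨i, hi, hi.trans hsu, by simpa [huv.getElem (hi.trans hsu)] using hlt⟩

lemma IsSmooth.nodeHt_mono (hsm : IsSmooth B) (hB : IsBlock B) (hwf : WellFounded (childRel B))
    {t s : List ℕ} (ht : t ∈ TreeOf B) (hs : s ∈ TreeOf B) (hts : Forall₂ (· ≤ ·) t s) :
    nodeHt B hwf t ≤ nodeHt B hwf s := by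
  induction t using hwf.induction generalizing s with
  | _ t IH =>
  refine nodeHt_le_of_forall_childRel_lt hwf ?_
  intro _ hchild
  obtain ⟨htm, m, rfl⟩ := id hchild
  by_cases hsB : s ∈ B
  · exfalso
    obtain ⟨i, hi, hi', hlt⟩ := hsm.exists_lt_of_mem_treeOf hsB htm (by simp [hts.length_eq])
    have hit : i < t.length := hts.length_eq ▸ hi
    have hle : t[i] ≤ s[i] := hts.get hit hi
    rw [getElem_append_left hit] at hlt
    exact hlt.not_ge hle
  · obtain ⟨m', hmm', hs'⟩ := hB.exists_append_mem_treeOf hs hsB m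
    calc nodeHt B hwf (t ++ [m])
        ≤ nodeHt B hwf (s ++ [m']) :=
          IH _ hchild htm hs' (rel_append hts (Forall₂.cons hmm'.le Forall₂.nil))
      _ < nodeHt B hwf s := nodeHt_lt_of_childRel hwf ⟨hs', m', rfl⟩

/-- Alternative characterization of smoothness: a block `B` is smooth iff for all
`s, t ∈ T(B)` with `|s| = |t|` and `ht_B(s) < ht_B(t)` there is `i < |s|` with
`s(i) < t(i)`. -/
theorem smooth_iff_tree_condition (B : Set (List ℕ)) (hB : IsBlock B)
    (hwf : WellFounded (childRel B)) :
    IsSmooth B ↔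
      ∀ s ∈ TreeOf B, ∀ t ∈ TreeOf B, s.length = t.length →
        nodeHt B hwf s < nodeHt B hwf t →
        ∃ i, ∃ (hi : i < s.length) (hi' : i < t.length), s.get ⟨i, hi⟩ < t.get ⟨i, hi'⟩ := by
  constructor
  · intro hsm s hs t ht hlen hlt
    by_contra! hge
    have hts : Forall₂ (· ≤ ·) t s := forall₂_iff_get.2 ⟨hlen.symm, fun i hi hi' => hge i hi' hi⟩
    exact (hsm.nodeHt_mono hB hwf ht hs hts).not_gt hlt
  · intro hcond s hs t ht hlen
    have hlt : nodeHt B hwf s < nodeHt B hwf (t.take s.length) := by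
      rw [hB.nodeHt_eq_zero hwf hs]
      exact zero_le.trans_lt
        (nodeHt_lt_of_childRel hwf (childRel_take_succ (mem_treeOf_of_mem ht) hlen))
    obtain ⟨i, hi, hi', h⟩ := hcond s (mem_treeOf_of_mem hs) _
      (mem_treeOf_of_prefix (take_prefix _ _) (mem_treeOf_of_mem ht)) (by simp [hlen.le]) hlt
    exact ⟨i, hi, hi.trans hlen, by simpa using h⟩
end
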